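/- Let T be a rooted binary phylogenetic X-tree with positive edge lengths, let e₁ and e₂ be the two edges incident with the root, of lengths ℓ₁ and ℓ₂, and let T₁ and T₂ be the maximal pendant subtrees below e₁ and e₂ respectively. Define φ_T(k) = min{ PD_T(W) : W ⊆ X, |W| = k } for 1 ≤ k ≤ |X|, with φ_T(0) = 0 and φ_T(k) = 0 when T is a single vertex. Then for all k ∈ {1,…,|X|}: φ_T(k) = min over pairs (k₁,k₂) of non-negative integers with k₁ + k₂ = k of [ φ_{T₁}(k₁) + φ_{T₂}(k₂) + ℓ₁·𝟙_{k₁>0} + ℓ₂·𝟙_{k₂>0} ], where 𝟙_{k_j>0} equals 1 if k_j > 0 and 0 otherwise. -/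

import Mathlib

/-!
Rooted phylogenetic `X`-trees with positive edge lengths.

A tree on a finite vertex type `V` is encoded by its parent function: the root
has no parent, every other vertex has one, and iterating the parent function
reaches the root.  The edge into a non-root vertex `v` has length `len v`, and
`hgt v` is the distance from the root to `v`.  Leaves are the vertices with no
children; the taxon set `X` of the paper is the set `leaves` of leaves.
Every non-leaf, non-root vertex has out-degree (number of children) at least 2.
-/

noncomputable section

attribute [local instance] Classical.propDecidable

structure PhyloTree (V : Type) [Fintype V] [DecidableEq V] where
  root : V
  parent : V → Option V
  len : V → ℝ
  hgt : V → ℝ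
  parent_root : parent root = none
  parent_isSome : ∀ v, v ≠ root → (parent v).isSome
  reaches_root : ∀ v, Relation.ReflTransGen (fun a b => parent a = some b) v root
  hgt_root : hgt root = 0
  hgt_eq : ∀ v u, parent v = some u → hgt v = hgt u + len v
  len_pos : ∀ v, v ≠ root → 0 < len v
  outdeg_ge_two : ∀ v, v ≠ root → (∃ u, parent u = some v) →
    2 ≤ Set.ncard {u | parent u = some v}

namespace PhyloTree

variable {V : Type} [Fintype V] [DecidableEq V]

/-- `T.step a b` : `b` is the parent of `a`. -/
def step (T : PhyloTree V) (a b : V) : Prop := T.parent a = some b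

/-- `T.anc u v` : `u` is an ancestor of `v`, i.e. `u` lies on the (unique) path
from the root to `v` (reflexively). -/
def anc (T : PhyloTree V) (u v : V) : Prop := Relation.ReflTransGen T.step v u

/-- a leaf is a vertex with no children. -/
def IsLeaf (T : PhyloTree V) (v : V) : Prop := ∀ u, T.parent u ≠ some v

/-- the leaf set (the taxon set `X`). -/
def leaves (T : PhyloTree V) : Set V := {v | T.IsLeaf v}

/-- Phylogenetic diversity of a set `Y`: the total length of all edges `e`
whose set of descendant leaves meets `Y` (the edge into a non-root vertex `v`
has length `T.len v`). -/
def PD (T : PhyloTree V) (Y : Set V) : ℝ :=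
  ∑ v : V, if v ≠ T.root ∧ ∃ x ∈ Y, T.IsLeaf x ∧ T.anc v x then T.len v else 0

/-- the ultrametric condition: all leaves are at the same distance from the root. -/
def Ultrametric (T : PhyloTree V) : Prop :=
  ∀ x y, T.IsLeaf x → T.IsLeaf y → T.hgt x = T.hgt y

/-- `R d`: the set of vertices within distance `d` above some leaf. -/
def R (T : PhyloTree V) (d : ℝ) : Set V :=
  {v | ∃ x, T.IsLeaf x ∧ T.anc v x ∧ T.hgt x - T.hgt v ≤ d}

/-- adjacency in the forest induced by `T` on a vertex set `S`. -/
def adjIn (T : PhyloTree V) (S : Set V) (u v : V) : Prop :=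
  u ∈ S ∧ v ∈ S ∧ (T.parent u = some v ∨ T.parent v = some u)

/-- the connected components of the forest induced by `T` on `S`. -/
def components (T : PhyloTree V) (S : Set V) : Set (Set V) :=
  {C | ∃ v ∈ S, C = S ∩ {u | Relation.ReflTransGen (T.adjIn S) v u}}

/-- `c d`: the number of connected components of the forest `T[R(d)]`. -/
def ccount (T : PhyloTree V) (d : ℝ) : ℕ := (T.components (T.R d)).ncard

/-- `k` is a branching value if `T[R(d)]` has exactly `k` components for some `d ≥ 0`. -/
def IsBranchingValue (T : PhyloTree V) (k : ℕ) : Prop := ∃ d : ℝ, 0 ≤ d ∧ T.ccount d = k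

/-- the branching distance `d_k = min {d : c(d) = k}`. -/
def branchDist (T : PhyloTree V) (k : ℕ) : ℝ := sInf {d | 0 ≤ d ∧ T.ccount d = k}

/-- `k⁻`: the largest branching value `≤ k`. -/
def kminus (T : PhyloTree V) (k : ℕ) : ℕ := sSup {j | j ≤ k ∧ T.IsBranchingValue j}

/-- `k⁺`: the smallest branching value `≥ k`. -/
def kplus (T : PhyloTree V) (k : ℕ) : ℕ := sInf {j | k ≤ j ∧ T.IsBranchingValue j}

/-- `A` is a size-`k` maxPD set. -/
def IsMaxPD (T : PhyloTree V) (k : ℕ) (A : Set V) : Prop :=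
  A ⊆ T.leaves ∧ A.ncard = k ∧ ∀ Y ⊆ T.leaves, Y.ncard = k → T.PD Y ≤ T.PD A

/-- `A` is a size-`k` minPD set. -/
def IsMinPD (T : PhyloTree V) (k : ℕ) (A : Set V) : Prop :=
  A ⊆ T.leaves ∧ A.ncard = k ∧ ∀ Y ⊆ T.leaves, Y.ncard = k → T.PD A ≤ T.PD Y

/-- `m T k`: the number of size-`k` maxPD sets of `T`. -/
def m (T : PhyloTree V) (k : ℕ) : ℕ := {A : Set V | T.IsMaxPD k A}.ncard

/-- `T` is binary: every non-leaf vertex has exactly two children. -/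
def Binary (T : PhyloTree V) : Prop :=
  ∀ v, ¬ T.IsLeaf v → Set.ncard {u | T.parent u = some v} = 2

end PhyloTree

namespace PhyloTree

variable {V : Type} [Fintype V] [DecidableEq V]

/-- the PD score, inside the pendant subtree of `T` rooted at `w`, of a set
`Y` of leaves: the total length of all edges of that subtree whose set of
descendant leaves meets `Y`. -/
def PDbelow (T : PhyloTree V) (w : V) (Y : Set V) : ℝ :=
  ∑ v : V, if v ≠ w ∧ T.anc w v ∧ ∃ x ∈ Y, T.IsLeaf x ∧ T.anc v x then T.len v else 0

/-- the leaves of the pendant subtree of `T` rooted at `w`. -/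
def leavesBelow (T : PhyloTree V) (w : V) : Set V := {x | T.IsLeaf x ∧ T.anc w x}

/-- `φ_{T_w}(k)`: the minimum PD score of a size-`k` set of leaves of the
pendant subtree of `T` rooted at `w` (so `φ(0) = 0`, and `φ(k) = 0` on a
single-vertex subtree). -/
def phiBelow (T : PhyloTree V) (w : V) (k : ℕ) : ℝ :=
  sInf {r | ∃ W : Set V, W ⊆ T.leavesBelow w ∧ W.ncard = k ∧ r = T.PDbelow w W}

end PhyloTree
/-!
Every non-root vertex lies below exactly one child `cᵢ` of the root, so the PD of a leaf set `W`
splits as the PD of `W ∩ Xᵢ` inside `Tᵢ`, plus the root edge `ℓᵢ` whenever `W ∩ Xᵢ ≠ ∅`,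
summed over `i = 1, 2`. Hence each size-`k` set scores at least the candidate for
`kᵢ = |W ∩ Xᵢ|`, and conversely the union of minimisers of `φ_{T₁}(k₁)` and `φ_{T₂}(k₂)` scores
exactly that candidate.
-/

namespace Set

variable {α : Type*} {s t A B : Set α}

theorem union_inter_eq_left_of_disjoint (hs : s ⊆ A) (ht : t ⊆ B) (hAB : Disjoint A B) :
    (s ∪ t) ∩ A = s := by
  rw [union_inter_distrib_right, inter_eq_self_of_subset_left hs,
    (hAB.symm.mono_left ht).inter_eq, union_empty]

theorem ncard_inter_add_ncard_inter [Finite α] (hs : s ⊆ A ∪ B) (hAB : Disjoint A B) :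
    (s ∩ A).ncard + (s ∩ B).ncard = s.ncard := by
  rw [← ncard_union_eq (hAB.mono inter_subset_right inter_subset_right),
    ← inter_union_distrib_left, inter_eq_self_of_subset_left hs]

end Set

namespace PhyloTree

variable {V : Type} [Fintype V] [DecidableEq V] (T : PhyloTree V)

theorem step_rightUnique : Relator.RightUnique T.step :=
  fun _ _ _ h₁ h₂ => Option.some.inj (h₁.symm.trans h₂)

theorem anc_total {u w v : V} (hu : T.anc u v) (hw : T.anc w v) : T.anc u w ∨ T.anc w u :=
  (Relation.ReflTransGen.total_of_right_unique T.step_rightUnique hu hw).symm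

theorem anc_root_iff {v : V} : T.anc v T.root ↔ v = T.root := by
  refine ⟨fun h => ?_, fun h => h ▸ Relation.ReflTransGen.refl⟩
  rcases Relation.ReflTransGen.cases_head h with h | ⟨u, hu, -⟩
  · exact h.symm
  · exact absurd (T.parent_root ▸ hu : (none : Option V) = some u) nofun

/-- PD of `W` in the pendant subtree at `c` together with the edge into `c`. -/
def PDstem (c : V) (W : Set V) : ℝ :=
  ∑ v : V, if T.anc c v ∧ ∃ x ∈ W, T.IsLeaf x ∧ T.anc v x then T.len v else 0

theorem PDstem_eq {c : V} {W : Set V} (hW : W ⊆ T.leavesBelow c) :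
    T.PDstem c W = T.PDbelow c W + if W.Nonempty then T.len c else 0 := by
  have hstem : (if W.Nonempty then T.len c else 0) =
      ∑ v : V, if v = c ∧ W.Nonempty then T.len v else 0 := by
    simp [ite_and, Finset.sum_ite_eq']
  rw [hstem, PDstem, PDbelow, ← Finset.sum_add_distrib]
  refine Finset.sum_congr rfl fun v _ => ?_
  by_cases hv : v = c
  · subst hv
    have hhit : (∃ x ∈ W, T.IsLeaf x ∧ T.anc v x) ↔ W.Nonempty :=
      ⟨fun ⟨x, hx, _⟩ => ⟨x, hx⟩, fun ⟨x, hx⟩ => ⟨x, hx, hW hx⟩⟩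
    have hrefl : T.anc v v := Relation.ReflTransGen.refl
    simp [hhit, hrefl]
  · simp [hv]

theorem PDstem_inter_leavesBelow (c : V) (W : Set V) :
    T.PDstem c (W ∩ T.leavesBelow c) = T.PDstem c W := by
  refine Finset.sum_congr rfl fun v _ => ?_
  by_cases hcv : T.anc c v
  · have hhit : (∃ x ∈ W ∩ T.leavesBelow c, T.IsLeaf x ∧ T.anc v x) ↔
        ∃ x ∈ W, T.IsLeaf x ∧ T.anc v x :=
      ⟨fun ⟨x, hx, hxv⟩ => ⟨x, hx.1, hxv⟩,
        fun ⟨x, hx, hl, hvx⟩ => ⟨x, ⟨hx, hl, hvx.trans hcv⟩, hl, hvx⟩⟩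
    simp only [hcv, hhit]
  · simp only [hcv, false_and, if_false]

theorem leavesBelow_root : T.leavesBelow T.root = T.leaves :=
  Set.ext fun x => ⟨fun h => h.1, fun h => ⟨h, T.reaches_root x⟩⟩

theorem ne_root_of_parent_eq_some {c p : V} (h : T.parent c = some p) : c ≠ T.root := by
  rintro rfl
  simp [T.parent_root] at h

theorem eq_of_anc_of_parent_eq_root {a b : V} (ha : T.parent a = some T.root)
    (hb : T.parent b = some T.root) (hab : T.anc a b) : a = b := by
  rcases Relation.ReflTransGen.cases_head hab with h | ⟨d, hbd, hda⟩
  · exact h.symm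
  · obtain rfl : d = T.root := T.step_rightUnique hbd hb
    exact absurd (T.anc_root_iff.mp hda) (T.ne_root_of_parent_eq_some ha)

theorem finite_phiBelow_candidates (w : V) (k : ℕ) :
    {r | ∃ W : Set V, W ⊆ T.leavesBelow w ∧ W.ncard = k ∧ r = T.PDbelow w W}.Finite :=
  (Set.finite_range (T.PDbelow w)).subset fun _ ⟨W, _, _, hr⟩ => ⟨W, hr.symm⟩

theorem phiBelow_le {w : V} {W : Set V} (hW : W ⊆ T.leavesBelow w) :
    T.phiBelow w W.ncard ≤ T.PDbelow w W :=
  csInf_le (T.finite_phiBelow_candidates w _).bddBelow ⟨W, hW, rfl, rfl⟩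

theorem exists_phiBelow_eq {w : V} {k : ℕ} (hk : k ≤ (T.leavesBelow w).ncard) :
    ∃ W ⊆ T.leavesBelow w, W.ncard = k ∧ T.phiBelow w k = T.PDbelow w W := by
  obtain ⟨W₀, hW₀, hW₀k⟩ := Set.exists_subset_card_eq hk
  have hfin := T.finite_phiBelow_candidates w k
  obtain ⟨W, hW, hWk, hφ⟩ := Set.Nonempty.csInf_mem (by exact ⟨_, W₀, hW₀, hW₀k, rfl⟩) hfin
  exact ⟨W, hW, hWk, hφ⟩

section RootChildren

variable {T} {c₁ c₂ : V} (hne : c₁ ≠ c₂)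
  (hch : {u | T.parent u = some T.root} = {c₁, c₂})
include hch

theorem parent_eq_root_of_mem_pair {c : V} (hc : c ∈ ({c₁, c₂} : Set V)) :
    T.parent c = some T.root :=
  (hch.symm ▸ hc : c ∈ {u | T.parent u = some T.root})

theorem anc_child_of_ne_root {v : V} (hv : v ≠ T.root) : T.anc c₁ v ∨ T.anc c₂ v := by
  rcases Relation.ReflTransGen.cases_tail (T.reaches_root v) with h | ⟨c, hvc, hc⟩
  · exact absurd h.symm hv
  · have hc : c ∈ ({c₁, c₂} : Set V) := hch ▸ hc
    rcases hc with rfl | rfl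
    exacts [Or.inl hvc, Or.inr hvc]

include hne in
theorem not_anc_child_and_anc_child (v : V) : ¬ (T.anc c₁ v ∧ T.anc c₂ v) := by
  rintro ⟨h₁, h₂⟩
  have hp₁ := parent_eq_root_of_mem_pair hch (Or.inl rfl)
  have hp₂ := parent_eq_root_of_mem_pair hch (Or.inr rfl)
  rcases T.anc_total h₁ h₂ with h | h
  · exact hne (T.eq_of_anc_of_parent_eq_root hp₁ hp₂ h)
  · exact hne (T.eq_of_anc_of_parent_eq_root hp₂ hp₁ h).symm

include hne in
theorem PDbelow_root_eq_PDstem_add (W : Set V) :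
    T.PDbelow T.root W = T.PDstem c₁ W + T.PDstem c₂ W := by
  rw [PDbelow, PDstem, PDstem, ← Finset.sum_add_distrib]
  refine Finset.sum_congr rfl fun v _ => ?_
  have hroot : T.anc T.root v := T.reaches_root v
  by_cases hv : v = T.root
  · subst hv
    have h₁ : ¬ T.anc c₁ T.root := fun h => T.ne_root_of_parent_eq_some
      (parent_eq_root_of_mem_pair hch (Or.inl rfl)) (T.anc_root_iff.mp h)
    have h₂ : ¬ T.anc c₂ T.root := fun h => T.ne_root_of_parent_eq_some
      (parent_eq_root_of_mem_pair hch (Or.inr rfl)) (T.anc_root_iff.mp h)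
    simp [h₁, h₂]
  · rcases anc_child_of_ne_root hch hv with h | h
    · have h' : ¬ T.anc c₂ v := fun h' => not_anc_child_and_anc_child hne hch v ⟨h, h'⟩
      simp [hv, h, h', hroot]
    · have h' : ¬ T.anc c₁ v := fun h' => not_anc_child_and_anc_child hne hch v ⟨h', h⟩
      simp [hv, h, h', hroot]

include hne in
theorem PDbelow_root_eq (W : Set V) :
    T.PDbelow T.root W =
      T.PDbelow c₁ (W ∩ T.leavesBelow c₁) + T.PDbelow c₂ (W ∩ T.leavesBelow c₂) +
        (if 0 < (W ∩ T.leavesBelow c₁).ncard then T.len c₁ else 0) +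
        (if 0 < (W ∩ T.leavesBelow c₂).ncard then T.len c₂ else 0) := by
  rw [PDbelow_root_eq_PDstem_add hne hch, ← T.PDstem_inter_leavesBelow c₁,
    ← T.PDstem_inter_leavesBelow c₂, T.PDstem_eq Set.inter_subset_right,
    T.PDstem_eq Set.inter_subset_right]
  simp only [Set.ncard_pos (Set.toFinite _)]
  ring

theorem leaves_eq_union : T.leaves = T.leavesBelow c₁ ∪ T.leavesBelow c₂ := by
  refine Set.Subset.antisymm (fun x hx => ?_) (Set.union_subset (fun _ h => h.1) fun _ h => h.1)
  have hx_root : x ≠ T.root := by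
    rintro rfl
    exact hx c₁ (parent_eq_root_of_mem_pair hch (Or.inl rfl))
  exact (anc_child_of_ne_root hch hx_root).imp (⟨hx, ·⟩) (⟨hx, ·⟩)

include hne in
theorem disjoint_leavesBelow : Disjoint (T.leavesBelow c₁) (T.leavesBelow c₂) :=
  Set.disjoint_left.mpr fun x h₁ h₂ => not_anc_child_and_anc_child hne hch x ⟨h₁.2, h₂.2⟩

end RootChildren

end PhyloTree

theorem minPD_dynamic_programming_binary_general
    {V : Type} [Fintype V] [DecidableEq V] (T : PhyloTree V)
    (c₁ c₂ : V) (hne : c₁ ≠ c₂)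
    (hch : {u | T.parent u = some T.root} = {c₁, c₂})
    (k : ℕ) :
    T.phiBelow T.root k =
      sInf {r | ∃ k₁ k₂ : ℕ, k₁ + k₂ = k ∧
        k₁ ≤ (T.leavesBelow c₁).ncard ∧ k₂ ≤ (T.leavesBelow c₂).ncard ∧
        r = T.phiBelow c₁ k₁ + T.phiBelow c₂ k₂ +
            (if 0 < k₁ then T.len c₁ else 0) + (if 0 < k₂ then T.len c₂ else 0)} := by
  have hdisj := PhyloTree.disjoint_leavesBelow hne hch
  have hroot : T.leavesBelow T.root = T.leavesBelow c₁ ∪ T.leavesBelow c₂ := by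
    rw [T.leavesBelow_root, PhyloTree.leaves_eq_union hch]
  apply csInf_eq_csInf_of_forall_exists_le
  · rintro _ ⟨W, hW, rfl, rfl⟩
    refine ⟨_, ⟨_, _, Set.ncard_inter_add_ncard_inter (hroot ▸ hW) hdisj,
      Set.ncard_le_ncard Set.inter_subset_right,
      Set.ncard_le_ncard Set.inter_subset_right, rfl⟩, ?_⟩
    rw [PhyloTree.PDbelow_root_eq hne hch W]
    gcongr <;> exact T.phiBelow_le Set.inter_subset_right
  · rintro _ ⟨k₁, k₂, rfl, hk₁, hk₂, rfl⟩
    obtain ⟨W₁, hW₁, rfl, hφ₁⟩ := T.exists_phiBelow_eq hk₁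
    obtain ⟨W₂, hW₂, rfl, hφ₂⟩ := T.exists_phiBelow_eq hk₂
    have h₁ := Set.union_inter_eq_left_of_disjoint hW₁ hW₂ hdisj
    have h₂ := Set.union_comm W₁ W₂ ▸ Set.union_inter_eq_left_of_disjoint hW₂ hW₁ hdisj.symm
    refine ⟨_, ⟨W₁ ∪ W₂, hroot ▸ Set.union_subset_union hW₁ hW₂,
      Set.ncard_union_eq (hdisj.mono hW₁ hW₂), rfl⟩, ?_⟩
    rw [PhyloTree.PDbelow_root_eq hne hch, h₁, h₂, hφ₁, hφ₂]

/-- Proposition 7 of the paper.  Let `T` be a rooted binary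
phylogenetic tree whose root has the two children `c₁ ≠ c₂` (so the root edges
`e₁, e₂` have lengths `len c₁, len c₂`, and `T₁, T₂` are the pendant subtrees
rooted at `c₁, c₂`).  Then for all `1 ≤ k ≤ |X|`,
`φ_T(k) = min { φ_{T₁}(k₁) + φ_{T₂}(k₂) + ℓ₁·𝟙_{k₁>0} + ℓ₂·𝟙_{k₂>0} :
k₁ + k₂ = k }`.  (Note `φ_T = φ` of the subtree rooted at the root.) -/
theorem minPD_dynamic_programming_binary
    {V : Type} [Fintype V] [DecidableEq V] (T : PhyloTree V)
    (hB : T.Binary) (c₁ c₂ : V) (hne : c₁ ≠ c₂)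
    (hch : {u | T.parent u = some T.root} = {c₁, c₂})
    (k : ℕ) (hk : 1 ≤ k) (hkn : k ≤ T.leaves.ncard) :
    T.phiBelow T.root k =
      sInf {r | ∃ k₁ k₂ : ℕ, k₁ + k₂ = k ∧
        k₁ ≤ (T.leavesBelow c₁).ncard ∧ k₂ ≤ (T.leavesBelow c₂).ncard ∧
        r = T.phiBelow c₁ k₁ + T.phiBelow c₂ k₂ +
            (if 0 < k₁ then T.len c₁ else 0) + (if 0 < k₂ then T.len c₂ else 0)} :=
  minPD_dynamic_programming_binary_general T c₁ c₂ hne hch k
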